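/- arXiv:1209.1212 — 6 statements merged into one kernel-verified Lean document; each statement's English description precedes it below -/
import Mathlib

section
/- Let α, β, γ be scalars in a field K (the reals or complexes) such that (α, β) ≠ (0, 0) and (β, γ) ≠ (0, 0). Then there exist scalars a, b, c in K such that aα + bβ = -1, bα + cβ = 1, and aβ + bγ ≠ 0. -/
theorem stmt_0 {K : Type*} [RCLike K] (α β γ : K)
    (h1 : (α, β) ≠ (0, 0)) (h2 : (β, γ) ≠ (0, 0)) :
    ∃ a b c : K, a * α + b * β = -1 ∧ b * α + c * β = 1 ∧ a * β + b * γ ≠ 0 := by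
  by_cases hβ : β = 0
  · subst hβ
    have hα : α ≠ 0 := by
      intro h; exact h1 (by simp [h])
    have hγ : γ ≠ 0 := by
      intro h; exact h2 (by simp [h])
    refine ⟨-α⁻¹, α⁻¹, 0, by field_simp; ring, by field_simp; ring, ?_⟩
    simp [hα, hγ]
  · by_cases hd : β ^ 2 - α * γ = 0
    · have hγ : γ ≠ 0 := by
        intro h
        apply hβ
        have : β ^ 2 = 0 := by rw [h] at hd; linear_combination hd
        exact pow_eq_zero_iff (n := 2) (by norm_num) |>.mp this
      refine ⟨0, -β⁻¹, β⁻¹ + α * β⁻¹ ^ 2, ?_, ?_, ?_⟩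
      · field_simp; ring
      · field_simp; ring
      · simp only [zero_mul, zero_add, neg_mul, neg_eq_zero, ne_eq]
        intro h
        rcases mul_eq_zero.mp h with h | h
        · exact hβ (inv_eq_zero.mp h) |>.elim
        · exact hγ h
    · set a : K := (γ + 1) / (β ^ 2 - α * γ) with ha
      set b : K := (-1 - a * α) / β with hb
      set c : K := (1 - b * α) / β with hc
      refine ⟨a, b, c, ?_, ?_, ?_⟩
      · rw [hb]; field_simp; ring
      · rw [hc]; field_simp; ring
      · have : a * β + b * γ = β⁻¹ := by
          have e1 : b * β = -1 - a * α := by rw [hb]; exact div_mul_cancel₀ _ hβ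
          have e2 : a * (β ^ 2 - α * γ) = γ + 1 := by rw [ha]; exact div_mul_cancel₀ _ hd
          apply eq_inv_of_mul_eq_one_left; linear_combination e2 + γ * e1
        rw [this]
        exact inv_ne_zero hβ
end

section
/- Let X be a topological vector space over K, let T₁, ..., Tₘ be continuous linear operators on X, and suppose (x₁, ..., xₘ) ∈ Xᵐ is a hypercyclic vector for the direct sum T₁ ⊕ ... ⊕ Tₘ, i.e., the set {(T₁ⁿx₁, ..., Tₘⁿxₘ) : n ∈ ℕ} is dense in Xᵐ. Suppose S₁, ..., Sₘ are continuous linear operators on X with continuous inverses, and x ∈ X satisfies Sⱼxⱼ = x for each j. Then (x, ..., x) is a hypercyclic vector for R₁ ⊕ ... ⊕ Rₘ, where Rⱼ = Sⱼ Tⱼ Sⱼ⁻¹; in particular, the tuple (R₁, ..., Rₘ) is disjoint hypercyclic. -/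
theorem stmt_1 {K : Type*} [RCLike K] {X : Type*} [AddCommGroup X] [Module K X]
    [TopologicalSpace X] [IsTopologicalAddGroup X] [ContinuousSMul K X]
    (m : ℕ) (T : Fin m → (X →L[K] X)) (x : Fin m → X)
    (hx : Dense {v : Fin m → X | ∃ n : ℕ, (fun j => ((T j) ^ n) (x j)) = v})
    (S : Fin m → (X ≃L[K] X)) (x₀ : X) (hS : ∀ j, S j (x j) = x₀) :
    Dense {v : Fin m → X |
      ∃ n : ℕ, (fun j =>
        ((((S j : X →L[K] X).comp (T j)).comp ((S j).symm : X →L[K] X)) ^ n) x₀) = v} := by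
  have key : ∀ (j : Fin m) (n : ℕ),
      ((((S j : X →L[K] X).comp (T j)).comp ((S j).symm : X →L[K] X)) ^ n) x₀
        = S j (((T j) ^ n) (x j)) := by
    intro j n
    induction n with
    | zero => simp [← hS j]
    | succ n ih =>
      rw [pow_succ', pow_succ']
      simp only [ContinuousLinearMap.mul_apply, ih]
      simp [ContinuousLinearMap.comp_apply]
  let e : (Fin m → X) ≃ₜ (Fin m → X) :=
    Homeomorph.piCongrRight (fun j => (S j).toHomeomorph)
  have himg : {v : Fin m → X |
      ∃ n : ℕ, (fun j =>
        ((((S j : X →L[K] X).comp (T j)).comp ((S j).symm : X →L[K] X)) ^ n) x₀) = v}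
      = e '' {v : Fin m → X | ∃ n : ℕ, (fun j => ((T j) ^ n) (x j)) = v} := by
    ext v
    constructor
    · rintro ⟨n, rfl⟩
      exact ⟨fun j => ((T j) ^ n) (x j), ⟨n, rfl⟩, by funext j; exact (key j n).symm⟩
    · rintro ⟨w, ⟨n, rfl⟩, rfl⟩
      exact ⟨n, by funext j; exact key j n⟩
  rw [himg]
  exact e.surjective.denseRange.dense_image e.continuous hx
end

section
/- Let X be a topological vector space over K, let x, y ∈ X and let f, g be continuous linear functionals on X such that f(y) = g(x) and f(x)g(y) ≠ f(y)g(x). Then there exists an invertible continuous linear operator S on X with continuous inverse such that Sx = y and the dual operator S' satisfies S'f = g, where (S'φ)(u) = φ(Su), i.e., f(Su) = g(u) for all u ∈ X. -/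
set_option linter.unnecessarySeqFocus false

theorem aux_equiv {K : Type*} [RCLike K] {X : Type*} [AddCommGroup X] [Module K X]
    [TopologicalSpace X] [IsTopologicalAddGroup X] [ContinuousSMul K X]
    (a b : X →L[K] K) (x y : X) (hax : a x = -1) (hbx : b x = 1) (hay : a y ≠ 0) :
    ∃ S : X ≃L[K] X, ∀ u, (S : X → X) u = u + a u • x + b u • y := by
  set c := a y with hc
  set d := b y with hd
  set S0 : X →L[K] X := ContinuousLinearMap.id K X + a.smulRight x + b.smulRight y with hS0def
  set a' : X →L[K] K := ((1+d)/c) • a - b with ha'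
  set b' : X →L[K] K := (-(1/c)) • a with hb'
  set T : X →L[K] X := ContinuousLinearMap.id K X + a'.smulRight x + b'.smulRight y with hTdef
  have hS0 : ∀ u, S0 u = u + a u • x + b u • y := by intro u; simp [hS0def]
  have hT : ∀ u, T u = u + a' u • x + b' u • y := by intro u; simp [hTdef]
  have hTS : Function.LeftInverse T S0 := by
    intro u
    rw [hS0, hT]
    simp only [map_add, map_smul, ha', hb', ContinuousLinearMap.sub_apply,
      ContinuousLinearMap.smul_apply, hax, hbx, ← hc, ← hd, smul_eq_mul]
    match_scalars <;> field_simp <;> ring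
  have hST : Function.RightInverse T S0 := by
    intro u
    rw [hT, hS0]
    simp only [map_add, map_smul, ha', hb', ContinuousLinearMap.sub_apply,
      ContinuousLinearMap.smul_apply, hax, hbx, ← hc, ← hd, smul_eq_mul]
    match_scalars <;> field_simp <;> ring
  exact ⟨ContinuousLinearEquiv.equivOfInverse S0 T hTS hST, fun u => hS0 u⟩

theorem stmt_4 {K : Type*} [RCLike K] {X : Type*} [AddCommGroup X] [Module K X]
    [TopologicalSpace X] [IsTopologicalAddGroup X] [ContinuousSMul K X]
    (x y : X) (f g : X →L[K] K)
    (h1 : f y = g x) (h2 : f x * g y ≠ f y * g x) :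
    ∃ S : X ≃L[K] X, S x = y ∧ ∀ u, f (S u) = g u := by
  by_cases hfy : f y = 0
  · -- Case f y = 0 : then g x = 0, f x ≠ 0, g y ≠ 0
    have hgx : g x = 0 := h1 ▸ hfy
    have hfx : f x ≠ 0 := fun h => h2 (by rw [h, hfy, hgx]; ring)
    have hgy : g y ≠ 0 := fun h => h2 (by rw [h, hfy, hgx]; ring)
    set a : X →L[K] K := (f x)⁻¹ • (g - f) with ha
    set b : X →L[K] K := (f x)⁻¹ • f with hb
    have hax : a x = -1 := by
      simp [ha, hgx, smul_eq_mul]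
      field_simp
    have hbx : b x = 1 := by
      simp [hb, smul_eq_mul]
      field_simp
    have hay : a y ≠ 0 := by
      simp [ha, hfy, smul_eq_mul]
      exact ⟨hfx, hgy⟩
    obtain ⟨S, hS⟩ := aux_equiv a b x y hax hbx hay
    refine ⟨S, ?_, ?_⟩
    · rw [hS x, hax, hbx]; module
    · intro u
      rw [hS u]
      simp only [map_add, map_smul, ha, hb, ContinuousLinearMap.smul_apply,
        ContinuousLinearMap.sub_apply, smul_eq_mul, hfy]
      field_simp
      ring
  · -- Case f y ≠ 0
    have hgx : g x = f y := h1.symm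
    set F1 := f x with hF1
    set F2 := f y with hF2
    set G2 := g y with hG2
    have hD : F1 * G2 - F2 * F2 ≠ 0 := by
      intro h
      apply h2
      rw [hgx]
      linear_combination h
    set D := F1 * G2 - F2 * F2 with hDdef
    set α : K := (1 - G2) / D with hα
    set β : K := (-1 - F1 * α) / F2 with hβ
    set δ : K := (1 - F1 * β) / F2 with hδ
    set a : X →L[K] K := α • f + β • g with ha
    set b : X →L[K] K := β • f + δ • g with hb
    have haxv : a x = -1 := by
      simp only [ha, ContinuousLinearMap.add_apply, ContinuousLinearMap.smul_apply,
        smul_eq_mul, ← hF1, hgx, ← hF2, hβ]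
      field_simp
      ring
    have hbxv : b x = 1 := by
      simp only [hb, ContinuousLinearMap.add_apply, ContinuousLinearMap.smul_apply,
        smul_eq_mul, ← hF1, hgx, ← hF2, hδ]
      field_simp
      ring
    have hayv : a y = -(1/F2) := by
      simp only [ha, ContinuousLinearMap.add_apply, ContinuousLinearMap.smul_apply,
        smul_eq_mul, ← hF2, ← hG2, hβ, hα]
      field_simp
      ring
    have hay : a y ≠ 0 := by
      rw [hayv]
      simp [hfy]
    obtain ⟨S, hS⟩ := aux_equiv a b x y haxv hbxv hay
    refine ⟨S, ?_, ?_⟩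
    · rw [hS x, haxv, hbxv]; module
    · intro u
      rw [hS u]
      have key1 : F1 * α + F2 * β = -1 := by rw [hβ]; field_simp; ring
      have key2 : F1 * β + F2 * δ = 1 := by rw [hδ]; field_simp; ring
      simp only [map_add, map_smul, ha, hb, ContinuousLinearMap.add_apply,
        ContinuousLinearMap.smul_apply, smul_eq_mul, ← hF1, ← hF2]
      linear_combination (f u) * key1 + (g u) * key2
end

section
/- Let X be a topological vector space, x, y ∈ X and f, g ∈ X' with f(y) = g(x) and f(x)g(y) ≠ f(y)g(x). Let a, b, c ∈ K satisfy a f(x) + b g(x) = -1, b f(x) + c g(x) = 1, and a g(x) + b g(y) ≠ 0. Define S : X → X by Su = u + a f(u)x + b f(u)y + b g(u)x + c g(u)y. Then S is a bijective continuous linear operator with continuous inverse, Sx = y, and f(Su) = g(u) for all u ∈ X. -/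
set_option maxHeartbeats 1000000 in
theorem stmt_6 {K : Type*} [RCLike K] {X : Type*} [AddCommGroup X] [Module K X]
    [TopologicalSpace X] [IsTopologicalAddGroup X] [ContinuousSMul K X]
    (x y : X) (f g : X →L[K] K)
    (h1 : f y = g x) (h2 : f x * g y ≠ f y * g x)
    (a b c : K)
    (e1 : a * f x + b * g x = -1) (e2 : b * f x + c * g x = 1)
    (e3 : a * g x + b * g y ≠ 0) :
    ∃ S : X ≃L[K] X,
      (∀ u, S u = u + (a * f u) • x + (b * f u) • y + (b * g u) • x + (c * g u) • y) ∧
      S x = y ∧ ∀ u, f (S u) = g u := by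
  set d : K := a * g x + b * g y with hd
  have hd0 : a * g x + b * g y ≠ 0 := e3
  set p : X →L[K] K := a • f + b • g with hp
  set q : X →L[K] K := b • f + c • g with hq
  set Sl : X →L[K] X := ContinuousLinearMap.id K X + p.smulRight x + q.smulRight y with hS
  set α : X →L[K] K := ((1 + (b * g x + c * g y))/d) • p - q with hα
  set Tl : X →L[K] X := ContinuousLinearMap.id K X + α.smulRight x + ((-(1/d)) • p).smulRight y with hT
  have hSu : ∀ u, Sl u = u + (p u) • x + (q u) • y := by
    intro u; simp [hS]
  have hTu : ∀ u, Tl u = u + (α u) • x + (-(1/d) * p u) • y := by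
    intro u; simp [hT]
  have hpu : ∀ u, p u = a * f u + b * g u := by intro u; simp [hp]
  have hqu : ∀ u, q u = b * f u + c * g u := by intro u; simp [hq]
  have hαu : ∀ u, α u = (1 + (b * g x + c * g y))/d * p u - q u := by
    intro u; simp [hα]
  have key1 : ∀ u, Tl (Sl u) = u := by
    intro u
    rw [hSu u, hTu]
    simp only [map_add, map_smul, hαu, hpu, hqu, smul_eq_mul]
    match_scalars
    · ring
    · rw [show f y = g x from h1]
      field_simp [hd0]
      linear_combination ((a*f u+b*g u)*(1+(b*g x+c*g y)))*e1 - ((a*f u+b*g u)*(a*g x+b*g y))*e2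
    · rw [show f y = g x from h1]
      field_simp [hd0]
      linear_combination (-(a*f u+b*g u))*e1
  have key2 : ∀ u, Sl (Tl u) = u := by
    intro u
    rw [hTu u, hSu]
    simp only [map_add, map_smul, hαu, hpu, hqu, smul_eq_mul]
    match_scalars
    · ring
    · rw [show f y = g x from h1]
      field_simp [hd0]
      linear_combination ((1+(b*g x+c*g y))*(a*f u+b*g u) - (a*g x+b*g y)*(b*f u+c*g u))*e1
    · rw [show f y = g x from h1]
      field_simp [hd0]
      linear_combination ((1+(b*g x+c*g y))*(a*f u+b*g u) - (a*g x+b*g y)*(b*f u+c*g u))*e2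
  refine ⟨ContinuousLinearEquiv.equivOfInverse Sl Tl key1 key2, ?_, ?_, ?_⟩
  · intro u
    rw [ContinuousLinearEquiv.equivOfInverse_apply, hSu u, hpu, hqu]
    match_scalars <;> ring
  · rw [ContinuousLinearEquiv.equivOfInverse_apply, hSu x, hpu, hqu, e1, e2]
    module
  · intro u
    rw [ContinuousLinearEquiv.equivOfInverse_apply, hSu u]
    simp only [map_add, map_smul, hpu, hqu, smul_eq_mul, h1]
    linear_combination f u * e1 + g u * e2
end

section
/- Suppose X is a separable infinite dimensional Fréchet space, m ∈ ℕ, and there exists a continuous linear operator T on X such that the direct sum T^{⊕m} of m copies of T is hypercyclic on Xᵐ. Then there exists a disjoint hypercyclic m-tuple (R₁, ..., Rₘ) of continuous linear operators on X; moreover each Rⱼ can be taken similar to T via an invertible operator, i.e., Rⱼ = Sⱼ T Sⱼ⁻¹ with Sⱼ ∈ GL(X). -/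
open RCLike

/-- Separating dual for `K` from the real locally convex structure. -/
lemma aux_separatingDual {K : Type*} [RCLike K] {X : Type*} [AddCommGroup X] [Module K X]
    [Module ℝ X] [IsScalarTower ℝ K X]
    [UniformSpace X] [IsUniformAddGroup X]
    [ContinuousSMul K X] [ContinuousSMul ℝ X] [LocallyConvexSpace ℝ X] [T2Space X] :
    SeparatingDual K X := by
  constructor
  intro x hx
  obtain ⟨f, hf⟩ := SeparatingDual.exists_ne_zero (R := ℝ) hx
  set g : X →ₗ[K] K := LinearMap.extendTo𝕜' (f : X →ₗ[ℝ] ℝ)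
  have hgc : Continuous g := by
    have : (g : X → K) = fun y => ((f y : K)) - (I : K) * (f ((I : K) • y) : K) := rfl
    rw [this]
    fun_prop
  refine ⟨⟨g, hgc⟩, fun h => hf ?_⟩
  have := congrArg (re (K := K)) h
  rwa [ContinuousLinearMap.coe_mk', show g x = Module.Dual.extendRCLike (f : X →ₗ[ℝ] ℝ) x from rfl, LinearMap.extendTo𝕜'_apply_re, map_zero] at this

lemma aux_pow_conj {K : Type*} [RCLike K] {X : Type*} [AddCommGroup X] [Module K X]
    [UniformSpace X] [IsUniformAddGroup X] [ContinuousSMul K X]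
    (e : X ≃L[K] X) (T : X →L[K] X) (n : ℕ) (y : X) :
    (((((e : X →L[K] X).comp T).comp (e.symm : X →L[K] X)) ^ n) y)
      = e ((T ^ n) (e.symm y)) := by
  induction n with
  | zero => simp
  | succ n ih =>
      rw [pow_succ', pow_succ']
      simp only [ContinuousLinearMap.mul_apply, ih]
      simp

theorem stmt_10 {K : Type*} [RCLike K] {X : Type*} [AddCommGroup X] [Module K X]
    [Module ℝ X] [IsScalarTower ℝ K X]
    [UniformSpace X] [IsUniformAddGroup X] [CompleteSpace X]
    [TopologicalSpace.MetrizableSpace X] [TopologicalSpace.SeparableSpace X]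
    [ContinuousSMul K X] [ContinuousSMul ℝ X] [LocallyConvexSpace ℝ X] [T2Space X]
    (hinf : ¬ FiniteDimensional K X)
    (m : ℕ) (T : X →L[K] X)
    (hT : ∃ v : Fin m → X, Dense {w : Fin m → X | ∃ n : ℕ, (fun j => (T ^ n) (v j)) = w}) :
    ∃ S : Fin m → (X ≃L[K] X), ∃ x : X,
      Dense {w : Fin m → X | ∃ n : ℕ, (fun j =>
        (((((S j) : X →L[K] X).comp T).comp ((S j).symm : X →L[K] X)) ^ n) x) = w} := by
  have hsep : SeparatingDual K X := aux_separatingDual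
  obtain ⟨v, hv⟩ := hT
  have hnt : Nontrivial X := by
    rcases subsingleton_or_nontrivial X with h | h
    · exact absurd (Module.Finite.of_basis (Module.Basis.empty (ι := Empty) X)) hinf
    · exact h
  obtain ⟨x₀, hx₀⟩ := exists_ne (0 : X)
  -- each v j is nonzero
  have hvj : ∀ j, v j ≠ 0 := by
    intro j hj
    have hsub : {w : Fin m → X | ∃ n : ℕ, (fun j => (T ^ n) (v j)) = w}
        ⊆ {w : Fin m → X | w j = 0} := by
      rintro w ⟨n, rfl⟩
      simp [hj]
    have hcl : IsClosed {w : Fin m → X | w j = 0} :=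
      isClosed_singleton.preimage (continuous_apply j)
    have hd : Dense {w : Fin m → X | w j = 0} := hv.mono hsub
    have : (fun _ : Fin m => x₀) ∈ {w : Fin m → X | w j = 0} := by
      rw [← hcl.closure_eq]; exact hd _
    exact hx₀ this
  -- choose equivalences mapping v j to x₀
  have hS : ∀ j, ∃ e : X ≃L[K] X, e (v j) = x₀ := fun j =>
    SeparatingDual.exists_continuousLinearEquiv_apply_eq (hvj j) hx₀
  choose S hSv using hS
  refine ⟨S, x₀, ?_⟩
  -- the map w ↦ (S j (w j))ⱼ is a homeomorphism
  let Φ : (Fin m → X) ≃ₜ (Fin m → X) :=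
    Homeomorph.piCongrRight (fun j => (S j).toHomeomorph)
  have hΦ : Dense (Φ '' {w : Fin m → X | ∃ n : ℕ, (fun j => (T ^ n) (v j)) = w}) :=
    Φ.surjective.denseRange.dense_image Φ.continuous hv
  refine hΦ.mono ?_
  rintro w ⟨u, ⟨n, rfl⟩, rfl⟩
  refine ⟨n, ?_⟩
  funext j
  have hsymm : (S j).symm x₀ = v j := by
    rw [← hSv j, ContinuousLinearEquiv.symm_apply_apply]
  rw [aux_pow_conj (S j) T n x₀, hsymm]
  rfl
end

section
/- Let X be an infinite dimensional Banach space with separable dual, and suppose T ∈ L(X) is such that both the m-fold direct sums T^{⊕m} on Xᵐ and (T')^{⊕m} on (X')ᵐ are hypercyclic. Then there exist operators R₁, ..., Rₘ ∈ L(X), each similar to T via an element of GL(X), such that (R₁, ..., Rₘ) is disjoint dual hypercyclic, i.e., both (R₁, ..., Rₘ) and (R₁', ..., Rₘ') are disjoint hypercyclic tuples. -/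
open ContinuousLinearMap Set

section Aux

variable {K : Type*} [RCLike K] {X : Type*} [NormedAddCommGroup X] [NormedSpace K X]

/-- A rank-one shear `y ↦ y + g y • w`, invertible when `c * (1 + g w) = 1`. -/
noncomputable def myShear (g : X →L[K] K) (w : X) (c : K) (hc : c * (1 + g w) = 1) :
    X ≃L[K] X :=
  ContinuousLinearEquiv.equivOfInverse
    (ContinuousLinearMap.id K X + g.smulRight w)
    (ContinuousLinearMap.id K X - c • g.smulRight w)
    (fun y => by
      simp only [ContinuousLinearMap.add_apply, ContinuousLinearMap.sub_apply,
        ContinuousLinearMap.smul_apply, ContinuousLinearMap.coe_id', id_eq,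
        ContinuousLinearMap.smulRight_apply, map_add, map_smul, smul_eq_mul, smul_smul]
      match_scalars
      · ring
      · linear_combination (-(g y)) * hc)
    (fun z => by
      simp only [ContinuousLinearMap.add_apply, ContinuousLinearMap.sub_apply,
        ContinuousLinearMap.smul_apply, ContinuousLinearMap.coe_id', id_eq,
        ContinuousLinearMap.smulRight_apply, map_sub, map_smul, smul_eq_mul, smul_smul]
      match_scalars
      · ring
      · linear_combination (-(g z)) * hc)

@[simp] lemma myShear_apply (g : X →L[K] K) (w : X) (c : K) (hc : c * (1 + g w) = 1) (y : X) :
    myShear g w c hc y = y + g y • w := rfl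

lemma dense_of_subsingleton {α : Type*} [TopologicalSpace α] [Subsingleton α] {s : Set α}
    (h : s.Nonempty) : Dense s := by
  obtain ⟨y, hy⟩ := h
  intro x
  rw [Subsingleton.elim x y]
  exact subset_closure hy

lemma dense_image_homeo {α β : Type*} [TopologicalSpace α] [TopologicalSpace β] (e : α ≃ₜ β)
    {s : Set α} (hs : Dense s) : Dense (e '' s) := by
  rw [dense_iff_closure_eq, ← e.image_closure, hs.closure_eq, Set.image_univ,
    e.surjective.range_eq]

lemma dense_ne_zero (g : X →L[K] K) (hg : g ≠ 0) : Dense {y : X | g y ≠ 0} := by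
  obtain ⟨z, hz⟩ := DFunLike.ne_iff.1 hg
  simp only [ContinuousLinearMap.zero_apply] at hz
  intro y
  rw [Metric.mem_closure_iff]
  intro ε hε
  by_cases hy : g y ≠ 0
  · exact ⟨y, hy, by simpa using hε⟩
  push_neg at hy
  set t : ℝ := ε / (2 * (‖z‖ + 1)) with ht
  have hzpos : (0:ℝ) < ‖z‖ + 1 := by positivity
  have htpos : 0 < t := by positivity
  refine ⟨y + (t : K) • z, ?_, ?_⟩
  · simp only [Set.mem_setOf_eq, map_add, map_smul, hy, smul_eq_mul, zero_add]
    exact mul_ne_zero (by exact_mod_cast htpos.ne') hz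
  · have : dist y (y + (t : K) • z) = t * ‖z‖ := by
      rw [dist_eq_norm]
      simp [norm_smul, abs_of_pos htpos]
    rw [this]
    have h1 : t * ‖z‖ < t * (‖z‖ + 1) := by nlinarith
    have h2 : t * (‖z‖ + 1) = ε / 2 := by
      field_simp [ht]
      have h3 : t * (2 * (‖z‖ + 1)) = ε := by
        rw [ht]; exact div_mul_cancel₀ ε (by positivity)
      linarith
    linarith

lemma conj_pow_apply (S : X ≃L[K] X) (T : X →L[K] X) (k : ℕ) (y : X) :
    ((((S : X →L[K] X).comp T).comp (S.symm : X →L[K] X)) ^ k) y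
      = S ((T ^ k) (S.symm y)) := by
  induction k generalizing y with
  | zero => simp
  | succ k ih =>
    rw [pow_succ, ContinuousLinearMap.mul_apply, ih]
    simp only [ContinuousLinearMap.coe_comp', Function.comp_apply,
      ContinuousLinearEquiv.coe_coe, ContinuousLinearEquiv.symm_apply_apply]
    rw [pow_succ, ContinuousLinearMap.mul_apply]

noncomputable def conjEquiv (φ f : X →L[K] K) (u x : X) (hφu : φ u = 1) (hfx : f x = 1)
    (hφx : φ x ≠ 0) : X ≃L[K] X :=
  (myShear φ ((φ x)⁻¹ • x - u) 1
      (by rw [map_sub, map_smul, smul_eq_mul, inv_mul_cancel₀ hφx, hφu]; ring)).trans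
    (myShear (φ - f) x (φ x)⁻¹
      (by
        rw [ContinuousLinearMap.sub_apply, hfx,
          show (1 : K) + (φ x - 1) = φ x from by ring]
        exact inv_mul_cancel₀ hφx))

lemma conjEquiv_apply_u (φ f : X →L[K] K) (u x : X) (hφu : φ u = 1) (hfx : f x = 1)
    (hφx : φ x ≠ 0) : conjEquiv φ f u x hφu hfx hφx u = x := by
  simp only [conjEquiv, ContinuousLinearEquiv.trans_apply, myShear_apply]
  rw [hφu, one_smul]
  rw [show u + ((φ x)⁻¹ • x - u) = (φ x)⁻¹ • x from by abel]
  rw [ContinuousLinearMap.sub_apply, map_smul, map_smul, smul_eq_mul, smul_eq_mul,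
    inv_mul_cancel₀ hφx, hfx]
  match_scalars
  ring

lemma f_conjEquiv (φ f : X →L[K] K) (u x : X) (hφu : φ u = 1) (hfx : f x = 1)
    (hφx : φ x ≠ 0) (y : X) : f (conjEquiv φ f u x hφu hfx hφx y) = φ y := by
  simp only [conjEquiv, ContinuousLinearEquiv.trans_apply, myShear_apply]
  have hq : φ ((φ x)⁻¹ • x - u) = 0 := by
    rw [map_sub, map_smul, smul_eq_mul, inv_mul_cancel₀ hφx, hφu]; ring
  have hz : φ (y + φ y • ((φ x)⁻¹ • x - u)) = φ y := by
    rw [map_add, map_smul, hq, smul_zero, add_zero]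
  rw [map_add, map_smul, smul_eq_mul, hfx, mul_one, ContinuousLinearMap.sub_apply, hz]
  ring

end Aux

theorem stmt_14 {K : Type*} [RCLike K] {X : Type*} [NormedAddCommGroup X] [NormedSpace K X]
    [CompleteSpace X]
    (hinf : ¬ FiniteDimensional K X)
    (hsep : TopologicalSpace.SeparableSpace (X →L[K] K))
    (m : ℕ) (T : X →L[K] X)
    (h1 : ∃ v : Fin m → X, Dense {w : Fin m → X | ∃ n : ℕ, (fun j => (T ^ n) (v j)) = w})
    (h2 : ∃ φ : Fin m → (X →L[K] K),
      Dense {ψ : Fin m → (X →L[K] K) | ∃ n : ℕ, (fun j => (φ j).comp (T ^ n)) = ψ}) :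
    ∃ S : Fin m → (X ≃L[K] X),
      (∃ x : X, Dense {w : Fin m → X | ∃ n : ℕ, (fun j =>
        (((((S j) : X →L[K] X).comp T).comp ((S j).symm : X →L[K] X)) ^ n) x) = w}) ∧
      (∃ f : X →L[K] K, Dense {ψ : Fin m → (X →L[K] K) | ∃ n : ℕ, (fun j =>
        f.comp ((((((S j) : X →L[K] X).comp T).comp ((S j).symm : X →L[K] X))) ^ n)) = ψ}) := by
  classical
  obtain ⟨v, hv⟩ := h1
  obtain ⟨φ, hφ⟩ := h2
  rcases eq_or_ne m 0 with hm | hm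
  · subst hm
    refine ⟨fun _ => ContinuousLinearEquiv.refl K X, ⟨0, ?_⟩, ⟨0, ?_⟩⟩
    · exact dense_of_subsingleton ⟨_, ⟨0, rfl⟩⟩
    · exact dense_of_subsingleton ⟨_, ⟨0, rfl⟩⟩
  haveI : NeZero m := ⟨hm⟩
  -- X is nontrivial
  haveI hXnt : Nontrivial X := by
    by_contra h
    rw [not_nontrivial_iff_subsingleton] at h
    exact hinf (Module.Finite.of_surjective (0 : (Fin 0 → K) →ₗ[K] X)
      (fun y => ⟨0, Subsingleton.elim _ _⟩))
  -- all φ j are nonzero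
  have hφne : ∀ j, φ j ≠ 0 := by
    intro j hj0
    obtain ⟨x0, hx0⟩ := exists_ne (0 : X)
    obtain ⟨g, _, hgx⟩ := exists_dual_vector K x0 (norm_ne_zero_iff.2 hx0)
    have hgne : g ≠ 0 := by
      intro hg
      rw [hg] at hgx
      simp only [ContinuousLinearMap.zero_apply] at hgx
      exact hx0 (norm_eq_zero.1 (by exact_mod_cast hgx.symm))
    have hsub : {ψ : Fin m → (X →L[K] K) | ∃ n : ℕ, (fun j => (φ j).comp (T ^ n)) = ψ}
        ⊆ {ψ | ψ j = 0} := by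
      rintro ψ ⟨n, rfl⟩
      simp [hj0]
    have hclosed : IsClosed {ψ : Fin m → (X →L[K] K) | ψ j = 0} :=
      isClosed_eq (continuous_apply j) continuous_const
    have hmem : (fun _ => g : Fin m → (X →L[K] K)) ∈ {ψ : Fin m → (X →L[K] K) | ψ j = 0} := by
      have := hφ (fun _ => g)
      rw [← hclosed.closure_eq]
      exact closure_mono hsub this
    exact hgne hmem
  -- a common vector where all φ j are nonzero
  have hzden : Dense (⋂ j : Fin m, {y : X | φ j y ≠ 0}) :=
    dense_iInter_of_isOpen
      (fun j => isOpen_compl_singleton.preimage (φ j).continuous)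
      (fun j => dense_ne_zero (φ j) (hφne j))
  obtain ⟨z, hz⟩ := hzden.nonempty
  rw [Set.mem_iInter] at hz
  -- find n making all the pairings nonzero
  have hUopen : IsOpen {w : Fin m → X | ∀ j, φ j (w j) ≠ 0 ∧ φ j (w 0) ≠ 0} := by
    have : {w : Fin m → X | ∀ j, φ j (w j) ≠ 0 ∧ φ j (w 0) ≠ 0}
        = ⋂ j, ({w : Fin m → X | φ j (w j) ≠ 0} ∩ {w : Fin m → X | φ j (w 0) ≠ 0}) := by
      ext w; simp [Set.mem_iInter, forall_and]
    rw [this]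
    refine isOpen_iInter_of_finite fun j => IsOpen.inter ?_ ?_
    · exact isOpen_compl_singleton.preimage ((φ j).continuous.comp (continuous_apply j))
    · exact isOpen_compl_singleton.preimage ((φ j).continuous.comp (continuous_apply 0))
  obtain ⟨w, hwO, hwU⟩ := hv.exists_mem_open hUopen ⟨fun _ => z, fun j => ⟨hz j, hz j⟩⟩
  obtain ⟨n, hn⟩ := hwO
  rw [← hn] at hwU
  have hn1 : ∀ j, φ j ((T ^ n) (v j)) ≠ 0 := fun j => (hwU j).1
  have hn2 : ∀ j, φ j ((T ^ n) (v 0)) ≠ 0 := fun j => (hwU j).2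
  -- rescaled hypercyclic tuple
  set a : Fin m → K := fun j => (φ j ((T ^ n) (v j)))⁻¹ with ha_def
  have ha : ∀ j, a j ≠ 0 := fun j => inv_ne_zero (hn1 j)
  set u : Fin m → X := fun j => a j • (T ^ n) (v j) with hu_def
  set x : X := u 0 with hx_def
  set f : X →L[K] K := φ 0 with hf_def
  have hu1 : ∀ j, φ j (u j) = 1 := by
    intro j
    simp only [hu_def, map_smul, smul_eq_mul, ha_def]
    exact inv_mul_cancel₀ (hn1 j)
  have hfx : f x = 1 := hu1 0
  have hφx : ∀ j, φ j x ≠ 0 := by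
    intro j
    simp only [hx_def, hu_def, map_smul, smul_eq_mul, ha_def]
    exact mul_ne_zero (inv_ne_zero (hn1 0)) (hn2 j)
  -- the conjugating equivalences
  set S : Fin m → (X ≃L[K] X) := fun j =>
    conjEquiv (φ j) f (u j) x (hu1 j) hfx (hφx j) with hS_def
  have hfS : ∀ j y, f (S j y) = φ j y := fun j y =>
    f_conjEquiv (φ j) f (u j) x (hu1 j) hfx (hφx j) y
  have hSu : ∀ j, S j (u j) = x := fun j =>
    conjEquiv_apply_u (φ j) f (u j) x (hu1 j) hfx (hφx j)
  have hSsymm : ∀ j, (S j).symm x = u j := by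
    intro j
    rw [ContinuousLinearEquiv.symm_apply_eq]
    exact (hSu j).symm
  refine ⟨S, ⟨x, ?_⟩, ⟨f, ?_⟩⟩
  · -- disjoint hypercyclicity of the tuple
    -- homeomorphism w ↦ (fun j => S j (a j • w j))
    set H : (Fin m → X) ≃ₜ (Fin m → X) :=
      Homeomorph.piCongrRight (fun j =>
        (Homeomorph.smulOfNeZero (a j) (ha j)).trans (S j).toHomeomorph) with hH_def
    have hset : {w : Fin m → X | ∃ k : ℕ, (fun j =>
        (((((S j) : X →L[K] X).comp T).comp ((S j).symm : X →L[K] X)) ^ k) x) = w}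
        = H '' {w : Fin m → X | ∃ k : ℕ, (fun j => (T ^ (k + n)) (v j)) = w} := by
      have key : ∀ (k : ℕ) (j : Fin m),
          (((((S j) : X →L[K] X).comp T).comp ((S j).symm : X →L[K] X)) ^ k) x
            = S j (a j • (T ^ (k + n)) (v j)) := by
        intro k j
        rw [conj_pow_apply, hSsymm j]
        congr 1
        simp only [hu_def, map_smul]
        congr 1
        rw [pow_add, ContinuousLinearMap.mul_apply]
      ext w
      constructor
      · rintro ⟨k, rfl⟩
        refine ⟨fun j => (T ^ (k + n)) (v j), ⟨k, rfl⟩, ?_⟩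
        funext j
        simp only [hH_def, Homeomorph.piCongrRight_apply, Homeomorph.trans_apply,
          Homeomorph.smulOfNeZero_apply, ContinuousLinearEquiv.coe_toHomeomorph]
        exact (key k j).symm
      · rintro ⟨w', ⟨k, rfl⟩, rfl⟩
        refine ⟨k, ?_⟩
        funext j
        simp only [hH_def, Homeomorph.piCongrRight_apply, Homeomorph.trans_apply,
          Homeomorph.smulOfNeZero_apply, ContinuousLinearEquiv.coe_toHomeomorph]
        exact key k j
    rw [hset]
    refine dense_image_homeo H ?_
    -- density of the shifted orbit
    haveI : ∀ p : Fin m → X, (nhdsWithin p {p}ᶜ).NeBot := by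
      intro p
      exact Module.punctured_nhds_neBot K (Fin m → X) p
    have hd : Dense ({w : Fin m → X | ∃ k : ℕ, (fun j => (T ^ k) (v j)) = w}
        \ ((fun k : ℕ => fun j => (T ^ k) (v j)) '' Set.Iio n)) :=
      hv.diff_finite ((Set.finite_Iio n).image _)
    refine hd.mono ?_
    rintro w ⟨⟨k, rfl⟩, hw2⟩
    have hkn : n ≤ k := by
      by_contra hk
      exact hw2 ⟨k, Set.mem_Iio.2 (by omega), rfl⟩
    exact ⟨k - n, by rw [show k - n + n = k by omega]⟩
  · -- disjoint hypercyclicity of the dual tuple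
    set H : (Fin m → (X →L[K] K)) ≃ₜ (Fin m → (X →L[K] K)) :=
      Homeomorph.piCongrRight (fun j =>
        ((S j).arrowCongr (ContinuousLinearEquiv.refl K K)).toHomeomorph) with hH_def
    have hset : {ψ : Fin m → (X →L[K] K) | ∃ k : ℕ, (fun j =>
        f.comp ((((((S j) : X →L[K] X).comp T).comp ((S j).symm : X →L[K] X))) ^ k)) = ψ}
        = H '' {ψ : Fin m → (X →L[K] K) | ∃ k : ℕ, (fun j => (φ j).comp (T ^ k)) = ψ} := by
      have key : ∀ (k : ℕ) (j : Fin m),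
          f.comp ((((((S j) : X →L[K] X).comp T).comp ((S j).symm : X →L[K] X))) ^ k)
            = (S j).arrowCongr (ContinuousLinearEquiv.refl K K) ((φ j).comp (T ^ k)) := by
        intro k j
        ext y
        rw [ContinuousLinearMap.comp_apply, conj_pow_apply, hfS j]
        simp only [ContinuousLinearEquiv.arrowCongr_apply, ContinuousLinearEquiv.coe_refl',
          ContinuousLinearMap.comp_apply, ContinuousLinearEquiv.coe_coe]
        rfl
      ext ψ
      constructor
      · rintro ⟨k, rfl⟩
        refine ⟨fun j => (φ j).comp (T ^ k), ⟨k, rfl⟩, ?_⟩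
        funext j
        simp only [hH_def, Homeomorph.piCongrRight_apply,
          ContinuousLinearEquiv.coe_toHomeomorph]
        exact (key k j).symm
      · rintro ⟨ψ', ⟨k, rfl⟩, rfl⟩
        refine ⟨k, ?_⟩
        funext j
        simp only [hH_def, Homeomorph.piCongrRight_apply,
          ContinuousLinearEquiv.coe_toHomeomorph]
        exact key k j
    rw [hset]
    exact dense_image_homeo H hφ
end
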